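/- In the (α, β)-hitting game, no player (probabilistic strategy) can guarantee to win in o(α·β) rounds with high probability; in particular, for any strategy, the expected number of rounds to guess all β pairs of the hidden target set R is Ω(α·β). -/

import Mathlib

/-! The `(α, β)`-hitting game. The referee secretly picks an injection
`f : Fin β → Fin α` (identifying the visible set `A` with `Fin α`); the secret target set
is `R = {(f 1, 1), …, (f β, β)}`, where `f` is uniformly distributed over injections
(a uniformly random sequence of `β` distinct elements of `A`). Each round the player
(a possibly randomized automaton: a strategy map from the history of yes/no answers to
the next guess, together with a uniformly random seed `r : ρ`) proposes a guess
`(x, y) ∈ A × [β]`; the referee answers whether `(x, y)` is currently in `R`, removing it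
from `R` if so. The player wins once every pair of `R` has been guessed. -/

/-- The referee's answer to guess `g`, given the secret `f` and the list `prev` of
previous guesses: `g` is in the current target set iff `g = (f y, y)` and `g` was not
guessed (and hence removed) before. -/
def hitResp {α β : ℕ} (f : Fin β → Fin α) (g : Fin α × Fin β)
    (prev : List (Fin α × Fin β)) : Bool :=
  decide (f g.2 = g.1 ∧ g ∉ prev)

/-- The play of a (deterministic) strategy `σ` (mapping answer histories to guesses)
against secret `f`: after `n` rounds, the list of answers received and of guesses made. -/
def hitPlay {α β : ℕ} (σ : List Bool → Fin α × Fin β) (f : Fin β → Fin α) :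
    ℕ → List Bool × List (Fin α × Fin β)
  | 0 => ([], [])
  | n + 1 =>
    let p := hitPlay σ f n
    let g := σ p.1
    (p.1 ++ [hitResp f g p.2], p.2 ++ [g])

/-- The guess made by strategy `σ` against secret `f` in round `n` (0-indexed). -/
def hitGuess {α β : ℕ} (σ : List Bool → Fin α × Fin β) (f : Fin β → Fin α) (n : ℕ) :
    Fin α × Fin β :=
  σ (hitPlay σ f n).1

/-- The player has won after `t` rounds: every element `(f i, i)` of the target set has
been guessed in some earlier round. -/
def hitWins {α β : ℕ} (σ : List Bool → Fin α × Fin β) (f : Fin β → Fin α) (t : ℕ) :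
    Prop :=
  ∀ i : Fin β, ∃ j < t, hitGuess σ f j = (f i, i)

/-! For a fixed deterministic strategy the answers received so far determine every guess.
Hence, once the player has won by round `t`, the set of rounds answered "yes" (which has
exactly `β` elements, the first hits of the `β` target pairs) determines the secret, so at
most `C(t, β)` secrets are beaten within `t` rounds. For `t = ⌊αβ/18⌋` the estimates
`C(t, β) ≤ t^β/β!`, `α^β β! ≤ α(α-1)⋯(α-β+1) β^β` and `β^β ≤ 3^β β!` show that this is at
most half of the `α(α-1)⋯(α-β+1)` secrets, so the expected number of rounds is at least
`(t + 1)/2 ≥ αβ/36`, for every seed. -/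

open Finset

namespace Nat

lemma pow_le_three_pow_mul_factorial (n : ℕ) : n ^ n ≤ 3 ^ n * n ! := by
  have hexp : ((n : ℝ) ^ n) / n ! ≤ 3 ^ n :=
    calc ((n : ℝ) ^ n) / n ! ≤ Real.exp n := Real.pow_div_factorial_le_exp _ n.cast_nonneg n
      _ = Real.exp 1 ^ n := by rw [← Real.exp_nat_mul, mul_one]
      _ ≤ 3 ^ n :=
        pow_le_pow_left₀ (Real.exp_pos 1).le (Real.exp_one_lt_d9.trans (by norm_num)).le n
  have := (div_le_iff₀ (by positivity : (0 : ℝ) < n !)).1 hexp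
  exact_mod_cast this

lemma pow_mul_factorial_le_descFactorial_mul_pow {a b : ℕ} (hba : b ≤ a) :
    a ^ b * b ! ≤ a.descFactorial b * b ^ b := by
  rw [← descFactorial_self, descFactorial_eq_prod_range, descFactorial_eq_prod_range,
    pow_eq_prod_const a, pow_eq_prod_const b, ← prod_mul_distrib, ← prod_mul_distrib]
  refine prod_le_prod' fun i _ => ?_
  rw [Nat.mul_sub, Nat.sub_mul, mul_comm a i]
  exact Nat.sub_le_sub_left (Nat.mul_le_mul_left i hba) _

lemma two_mul_choose_le_descFactorial {a b m : ℕ} (hb : 1 ≤ b) (hba : b ≤ a)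
    (hm : 18 * m ≤ a * b) : 2 * m.choose b ≤ a.descFactorial b := by
  have hchoose : m.choose b * b ! ≤ m ^ b := by
    rw [mul_comm, ← descFactorial_eq_factorial_mul_choose]; exact descFactorial_le_pow m b
  have hpow : m ^ b * 18 ^ b ≤ a ^ b * b ^ b := by
    rw [← mul_pow, ← mul_pow, mul_comm m]; exact Nat.pow_le_pow_left hm b
  have hstirling := pow_le_three_pow_mul_factorial b
  have hdesc := pow_mul_factorial_le_descFactorial_mul_pow hba
  have htwo : 2 ≤ 2 ^ b := by simpa using Nat.pow_le_pow_right two_pos hb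
  refine Nat.le_of_mul_le_mul_right ?_ (by positivity : 0 < b ! * b ! * 18 ^ b)
  calc 2 * m.choose b * (b ! * b ! * 18 ^ b)
      = 2 * b ! * ((m.choose b * b !) * 18 ^ b) := by ring
    _ ≤ 2 * b ! * (m ^ b * 18 ^ b) := by gcongr
    _ ≤ 2 * b ! * (a ^ b * b ^ b) := by gcongr
    _ = 2 * b ^ b * (a ^ b * b !) := by ring
    _ ≤ 2 * b ^ b * (a.descFactorial b * b ^ b) := by gcongr
    _ = 2 * a.descFactorial b * (b ^ b * b ^ b) := by ring
    _ ≤ 2 * a.descFactorial b * ((3 ^ b * b !) * (3 ^ b * b !)) := by gcongr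
    _ = 2 * 9 ^ b * (a.descFactorial b * (b ! * b !)) := by
        rw [show (9 : ℕ) = 3 * 3 by rfl, mul_pow]; ring
    _ ≤ 2 ^ b * 9 ^ b * (a.descFactorial b * (b ! * b !)) := by gcongr
    _ = a.descFactorial b * (b ! * b ! * 18 ^ b) := by
        rw [show (18 : ℕ) = 2 * 9 by rfl, mul_pow]; ring

end Nat

namespace HittingGame

lemma hitWins_mono {a b : ℕ} {σ : List Bool → Fin a × Fin b} {f : Fin b → Fin a} {t t' : ℕ}
    (htt' : t ≤ t') (hw : hitWins σ f t) : hitWins σ f t' :=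
  fun i => (hw i).imp fun _ ⟨hj, hguess⟩ => ⟨hj.trans_le htt', hguess⟩

variable {a b : ℕ} (σ : List Bool → Fin a × Fin b) (f f' : Fin b → Fin a)

def answer (n : ℕ) : Bool := hitResp f (hitGuess σ f n) (hitPlay σ f n).2

def hits (t : ℕ) : Finset ℕ := (range t).filter fun j => answer σ f j

lemma hitPlay_eq_map (n : ℕ) :
    hitPlay σ f n = ((List.range n).map (answer σ f), (List.range n).map (hitGuess σ f)) := by
  induction n with
  | zero => rfl
  | succ n ih =>
    change ((hitPlay σ f n).1 ++ [answer σ f n], (hitPlay σ f n).2 ++ [hitGuess σ f n]) = _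
    rw [ih, List.range_succ, List.map_append, List.map_append]
    rfl

lemma hitGuess_eq_of_answer_eq {n : ℕ} (h : ∀ j < n, answer σ f j = answer σ f' j) :
    hitGuess σ f n = hitGuess σ f' n := by
  rw [hitGuess, hitGuess, hitPlay_eq_map, hitPlay_eq_map]
  exact congrArg σ (List.map_congr_left fun j hj => h j (List.mem_range.1 hj))

lemma answer_eq_true_iff (n : ℕ) :
    answer σ f n = true ↔
      f (hitGuess σ f n).2 = (hitGuess σ f n).1 ∧ ∀ j < n, hitGuess σ f j ≠ hitGuess σ f n := by
  simp [answer, hitResp, hitPlay_eq_map]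

lemma exists_answer_eq_true_of_hitWins {t : ℕ} (hw : hitWins σ f t) (i : Fin b) :
    ∃ j < t, answer σ f j = true ∧ hitGuess σ f j = (f i, i) := by
  classical
  have hex : ∃ j, hitGuess σ f j = (f i, i) := (hw i).imp fun _ h => h.2
  obtain ⟨j₀, hj₀, hguess₀⟩ := hw i
  refine ⟨Nat.find hex, (Nat.find_min' hex hguess₀).trans_lt hj₀, ?_, Nat.find_spec hex⟩
  rw [answer_eq_true_iff, Nat.find_spec hex]
  exact ⟨rfl, fun j hj => Nat.find_min hex hj⟩

lemma eq_of_hits_eq {t : ℕ} (hw : hitWins σ f t) (h : hits σ f t = hits σ f' t) :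
    f = f' := by
  have hanswer : ∀ j < t, answer σ f j = answer σ f' j := fun j hj => by
    simpa [hits, hj] using congrArg (j ∈ ·) h
  funext i
  obtain ⟨j, hj, hyes, hguess⟩ := exists_answer_eq_true_of_hitWins σ f hw i
  have hguess' : hitGuess σ f' j = (f i, i) := by
    rw [← hguess]
    exact (hitGuess_eq_of_answer_eq σ f f' fun k hk => hanswer k (hk.trans hj)).symm
  rw [hanswer j hj, answer_eq_true_iff, hguess'] at hyes
  exact hyes.1.symm

lemma hitGuess_eq_of_answer_eq_true {n : ℕ} (h : answer σ f n = true) :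
    hitGuess σ f n = (f (hitGuess σ f n).2, (hitGuess σ f n).2) :=
  Prod.ext ((answer_eq_true_iff σ f n).1 h).1.symm rfl

lemma card_hits {t : ℕ} (hw : hitWins σ f t) : #(hits σ f t) = b := by
  have hyes : ∀ j ∈ hits σ f t, answer σ f j = true := fun j hj => (mem_filter.1 hj).2
  refine (card_bij (t := (univ : Finset (Fin b))) (fun j _ => (hitGuess σ f j).2)
    (fun _ _ => mem_univ _) ?_ ?_).trans (card_fin b)
  · intro j₁ hj₁ j₂ hj₂ h
    have hguess : hitGuess σ f j₁ = hitGuess σ f j₂ := by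
      rw [hitGuess_eq_of_answer_eq_true σ f (hyes j₁ hj₁),
        hitGuess_eq_of_answer_eq_true σ f (hyes j₂ hj₂), h]
    rcases lt_trichotomy j₁ j₂ with hlt | heq | hgt
    · exact absurd hguess (((answer_eq_true_iff σ f j₂).1 (hyes j₂ hj₂)).2 j₁ hlt)
    · exact heq
    · exact absurd hguess.symm (((answer_eq_true_iff σ f j₁).1 (hyes j₁ hj₁)).2 j₂ hgt)
  · intro i _
    obtain ⟨j, hj, hanswer, hguess⟩ := exists_answer_eq_true_of_hitWins σ f hw i
    exact ⟨j, mem_filter.2 ⟨mem_range.2 hj, hanswer⟩, by rw [hguess]⟩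

open scoped Classical in
lemma card_filter_hitWins_le (t : ℕ) :
    #{f : Fin b → Fin a | hitWins σ f t} ≤ t.choose b := by
  calc #{f : Fin b → Fin a | hitWins σ f t} ≤ #((range t).powersetCard b) := by
        refine card_le_card_of_injOn (hits σ · t) (fun f hf => ?_) fun f hf f' _ h => ?_
        · simp only [coe_filter, mem_univ, true_and, Set.mem_ofPred_eq] at hf
          exact mem_powersetCard.2 ⟨filter_subset _ _, card_hits σ f hf⟩
        · simp only [coe_filter, mem_univ, true_and, Set.mem_ofPred_eq] at hf
          exact eq_of_hits_eq σ f f' hf h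
    _ = t.choose b := by rw [card_powersetCard, card_range]

open scoped Classical in
lemma succ_mul_card_le_two_mul_sum_find {ι : Type*} [Fintype ι] {e : ι → Fin b → Fin a}
    (he : Function.Injective e) {m : ℕ} (hm : 2 * m.choose b ≤ Fintype.card ι)
    (hw : ∀ i, ∃ t, hitWins σ (e i) t) :
    (m + 1) * Fintype.card ι ≤ 2 * ∑ i, Nat.find (hw i) := by
  have hwinners : #{i | hitWins σ (e i) m} ≤ m.choose b :=
    (card_le_card_of_injOn e (fun i hi => by simpa using hi) he.injOn).trans
      (card_filter_hitWins_le σ m)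
  have hlosers : Fintype.card ι ≤ 2 * #{i | ¬hitWins σ (e i) m} := by
    have := card_filter_add_card_filter_not (s := univ) fun i => hitWins σ (e i) m
    rw [Finset.card_univ] at this
    omega
  have hslow : ∀ i ∈ ({i | ¬hitWins σ (e i) m} : Finset ι), m + 1 ≤ Nat.find (hw i) :=
    fun i hi => (Nat.lt_find_iff (hw i) m).2 fun k hk hwk =>
      (mem_filter.1 hi).2 (hitWins_mono hk hwk)
  calc (m + 1) * Fintype.card ι ≤ (m + 1) * (2 * #{i | ¬hitWins σ (e i) m}) := by gcongr
    _ = 2 * (#{i | ¬hitWins σ (e i) m} • (m + 1)) := by rw [smul_eq_mul]; ring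
    _ ≤ 2 * ∑ i ∈ {i | ¬hitWins σ (e i) m}, Nat.find (hw i) := by
        gcongr; exact card_nsmul_le_sum _ _ _ hslow
    _ ≤ 2 * ∑ i, Nat.find (hw i) := by
        gcongr; exact subset_univ _

end HittingGame

open scoped Classical in
/-- No player can win the `(α, β)`-hitting game in `o(α·β)` rounds with high probability:
there is a universal constant `c > 0` such that for every `β < α`, every seed space `ρ`
and every randomized strategy `σ` that always eventually wins, the expected number of
rounds until the target set is exhausted (over the uniformly random injective secret `f`
and the uniform seed) is at least `c·α·β`. -/
theorem stmt_15 :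
    ∃ c : ℝ, 0 < c ∧
      ∀ (α β : ℕ), 1 ≤ β → β < α →
        ∀ (ρ : Type) [Fintype ρ] [Nonempty ρ]
          (σ : ρ → List Bool → Fin α × Fin β)
          (hwin : ∀ (f : {f : Fin β → Fin α // Function.Injective f}) (r : ρ),
            ∃ t, hitWins (σ r) f.1 t),
          c * α * β ≤
            (∑ f : {f : Fin β → Fin α // Function.Injective f}, ∑ r : ρ,
                (Nat.find (hwin f r) : ℝ)) /
              ((Nat.card {f : Fin β → Fin α // Function.Injective f} : ℝ) *
                (Fintype.card ρ : ℝ)) := by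
  refine ⟨1 / 36, by norm_num, fun a b hb hba ρ _ _ σ hwin => ?_⟩
  set m := a * b / 18
  have hN : Fintype.card {f : Fin b → Fin a // Function.Injective f} = a.descFactorial b := by
    rw [Fintype.card_congr (Equiv.subtypeInjectiveEquivEmbedding (Fin b) (Fin a)),
      Fintype.card_embedding_eq, Fintype.card_fin, Fintype.card_fin]
  have hround (r : ρ) :
      ((m + 1 : ℕ) : ℝ) * a.descFactorial b ≤ 2 * ∑ f, (Nat.find (hwin f r) : ℝ) := by
    have hm : 2 * m.choose b ≤ a.descFactorial b :=
      Nat.two_mul_choose_le_descFactorial hb hba.le (Nat.mul_div_le (a * b) 18)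
    exact_mod_cast hN ▸ HittingGame.succ_mul_card_le_two_mul_sum_find (σ r)
      Subtype.val_injective (hN ▸ hm) (fun f => hwin f r)
  have hab : (a * b : ℝ) ≤ 18 * (m + 1 : ℕ) := by
    exact_mod_cast (Nat.lt_mul_div_succ (a * b) (by norm_num : 0 < 18)).le
  have hpos : 0 < a.descFactorial b := Nat.descFactorial_pos.2 hba.le
  rw [Nat.card_eq_fintype_card, hN, le_div_iff₀ (by positivity), sum_comm]
  calc 1 / 36 * a * b * (a.descFactorial b * Fintype.card ρ)
        = ∑ _r : ρ, (a * b : ℝ) / 36 * a.descFactorial b := by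
        rw [sum_const, card_univ, nsmul_eq_mul]; ring
    _ ≤ ∑ r : ρ, ∑ f, (Nat.find (hwin f r) : ℝ) := by
        gcongr with r; nlinarith [hround r]
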